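/- arXiv:2303.02586 — 6 statements merged into one kernel-verified Lean document; each statement's English description precedes it below -/
import Mathlib

section
/- Let D be a real diagonal positive definite matrix, u ∈ ℂᴺ, and W = D + u·uᴴ (which is Hermitian positive definite). Let h be a proper closed convex function. If β* ∈ ℂ satisfies uᴴ(x − prox_{λh}^D(x − D⁻¹u·β*)) + β* = 0, then prox_{λh}^W(x) = prox_{λh}^D(x − D⁻¹u·β*). -/
/-!
Completing the square: if `D` is Hermitian and `D b = u`, then for every `β` the `W`-weighted
objective at `x` equals the `D`-weighted objective at `x − β b`, plus `½ |uᴴ(w − x) − β|²`, minus a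
constant independent of `w`. The condition on `β` makes the square vanish at
`p = prox_{λh}^D(x − β b)`, which minimizes the `D`-objective, hence also the `W`-objective.
-/

open Matrix

noncomputable def proxObj {N : ℕ} (M : Matrix (Fin N) (Fin N) ℂ) (lam : ℝ)
    (h : (Fin N → ℂ) → ℝ) (v w : Fin N → ℂ) : ℝ :=
  lam * h w + (1 / 2) * (dotProduct (star (w - v)) (M.mulVec (w - v))).re

open scoped ComplexOrder

theorem re_star_dotProduct_add_vecMulVec_mulVec {n : Type*} [Fintype n]
    {D : Matrix n n ℂ} (hD : D.IsHermitian) {u b : n → ℂ} (hb : D *ᵥ b = u)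
    (e : n → ℂ) (β : ℂ) :
    (star e ⬝ᵥ (D + vecMulVec u (star u)) *ᵥ e).re =
      (star (e + β • b) ⬝ᵥ D *ᵥ (e + β • b)).re + Complex.normSq (star u ⬝ᵥ e - β)
        - (star (β • b) ⬝ᵥ D *ᵥ (β • b)).re - Complex.normSq β := by
  have hbD : star b ᵥ* D = star u := by
    rw [← hb, star_mulVec, hD.eq]
  have hu : star e ⬝ᵥ u = star (star u ⬝ᵥ e) := star_dotProduct _ _
  simp only [add_mulVec, vecMulVec_mulVec, mulVec_add, mulVec_smul, hb, star_add, star_smul,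
    dotProduct_add, add_dotProduct, dotProduct_smul, smul_dotProduct, dotProduct_mulVec (star b),
    hbD, hu]
  generalize star u ⬝ᵥ e = t
  simp only [RCLike.star_def, MulOpposite.smul_eq_mul_unop, MulOpposite.unop_op, smul_eq_mul,
    Complex.add_re, Complex.add_im, Complex.sub_re, Complex.mul_re, Complex.mul_im, Complex.conj_re, Complex.conj_im,
    Complex.sub_im, Complex.normSq_apply]
  ring

theorem proxObj_add_vecMulVec {N : ℕ} {D : Matrix (Fin N) (Fin N) ℂ} (hD : D.IsHermitian)
    {u b : Fin N → ℂ} (hb : D *ᵥ b = u) (lam : ℝ) (h : (Fin N → ℂ) → ℝ) (x : Fin N → ℂ)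
    (β : ℂ) (w : Fin N → ℂ) :
    proxObj (D + vecMulVec u (star u)) lam h x w =
      proxObj D lam h (x - β • b) w + Complex.normSq (star u ⬝ᵥ (w - x) - β) / 2
        - ((star (β • b) ⬝ᵥ D *ᵥ (β • b)).re + Complex.normSq β) / 2 := by
  have hw : w - (x - β • b) = w - x + β • b := by abel
  rw [proxObj, proxObj, hw, re_star_dotProduct_add_vecMulVec_mulVec hD hb]
  ring

theorem stmt_5_general {N : ℕ} (d : Fin N → ℝ) (hd : ∀ i, 0 < d i)
    (u x : Fin N → ℂ) (lam : ℝ)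
    (h : (Fin N → ℂ) → ℝ)
    (D : Matrix (Fin N) (Fin N) ℂ) (hD : D = Matrix.diagonal fun i => (d i : ℂ))
    (W : Matrix (Fin N) (Fin N) ℂ) (hW : W = D + Matrix.vecMulVec u (star u))
    (proxD : (Fin N → ℂ) → (Fin N → ℂ))
    (hproxD : ∀ v w, proxObj D lam h v (proxD v) ≤ proxObj D lam h v w)
    (β : ℂ)
    (hβ : dotProduct (star u) (x - proxD (x - β • D⁻¹.mulVec u)) + β = 0) :
    ∀ w, proxObj W lam h x (proxD (x - β • D⁻¹.mulVec u)) ≤ proxObj W lam h x w := by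
  intro w
  have hDpos : D.PosDef := hD ▸ PosDef.diagonal fun i => Complex.zero_lt_real.mpr (hd i)
  have hb : D *ᵥ (D⁻¹ *ᵥ u) = u := by
    rw [mulVec_mulVec, mul_nonsing_inv _ ((isUnit_iff_isUnit_det D).mp hDpos.isUnit),
      one_mulVec]
  have hp : star u ⬝ᵥ (proxD (x - β • D⁻¹ *ᵥ u) - x) - β = 0 := by
    rw [← neg_sub x, dotProduct_neg]
    linear_combination -hβ
  rw [hW, proxObj_add_vecMulVec hDpos.1 hb lam h x β, proxObj_add_vecMulVec hDpos.1 hb lam h x β,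
    hp, Complex.normSq_zero]
  linarith [hproxD (x - β • D⁻¹ *ᵥ u) w, Complex.normSq_nonneg (star u ⬝ᵥ (w - x) - β)]

/-- Becker's theorem (here with `W = D + uuᴴ`): if `β*` is a zero of
`β ↦ uᴴ(x − prox_{λh}^D(x − D⁻¹uβ)) + β`, then
`prox_{λh}^W(x) = prox_{λh}^D(x − D⁻¹uβ*)`, i.e. the latter point minimizes the
`W`-weighted proximal objective at `x`. -/
theorem stmt_5 {N : ℕ} (d : Fin N → ℝ) (hd : ∀ i, 0 < d i)
    (u x : Fin N → ℂ) (lam : ℝ) (hlam : 0 < lam)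
    (h : (Fin N → ℂ) → ℝ) (hconv : ConvexOn ℝ Set.univ h)
    (hlsc : LowerSemicontinuous h)
    (D : Matrix (Fin N) (Fin N) ℂ) (hD : D = Matrix.diagonal fun i => (d i : ℂ))
    (W : Matrix (Fin N) (Fin N) ℂ) (hW : W = D + Matrix.vecMulVec u (star u))
    (proxD : (Fin N → ℂ) → (Fin N → ℂ))
    (hproxD : ∀ v w, proxObj D lam h v (proxD v) ≤ proxObj D lam h v w)
    (β : ℂ)
    (hβ : dotProduct (star u) (x - proxD (x - β • D⁻¹.mulVec u)) + β = 0) :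
    ∀ w, proxObj W lam h x (proxD (x - β • D⁻¹.mulVec u)) ≤ proxObj W lam h x w :=
  stmt_5_general d hd u x lam h D hD W hW proxD hproxD β hβ
end

section
/- Let D be a real diagonal positive definite matrix, u ∈ ℂᴺ such that W = D − u·uᴴ is positive definite, and h a proper closed convex function. Then the map J(β) = uᴴ(x − prox_{λh}^D(x + D⁻¹u·β)) + β has a unique zero β* ∈ ℂ, and prox_{λh}^W(x) = prox_{λh}^D(x + D⁻¹u·β*). -/
/-! Put `e = D^{1/2}` and `c = e (D⁻¹u)`, so that `‖e z‖² = zᴴDz`, `⟪c, e z⟫ = uᴴz` and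
`zᴴWz = ‖e z‖² - |⟪c, e z⟫|²`; positive definiteness of `W` at `z = D⁻¹u` forces `‖c‖ < 1`.
For `v = x + βD⁻¹u` and `z = w - x`, completing the square gives
`‖e(w - v)‖² = zᴴWz + |uᴴz - β|² + (‖c‖² - 1)|β|²`.
The `D`-prox `P` is firmly nonexpansive and satisfies the three-point inequality
`obj_D(P v) + ‖e(w - P v)‖²/2 ≤ obj_D(w)`. The first makes `β ↦ uᴴ(P(x + βD⁻¹u) - x)`
a contraction with constant `‖c‖²`, whose unique fixed point is the unique zero of `J`; at that
fixed point, the second combined with the completed square and Cauchy–Schwarz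
`|uᴴ(w - P v)| ≤ ‖e(w - P v)‖` shows that `P v` minimizes `obj_W`. -/

open scoped ComplexOrder
open Matrix

open Set Filter Topology RCLike
open scoped InnerProductSpace

theorem norm_sub_smul_sq_eq {𝕜 E : Type*} [RCLike 𝕜] [NormedAddCommGroup E]
    [InnerProductSpace 𝕜 E] (c z : E) (β : 𝕜) :
    ‖z - β • c‖ ^ 2
      = ‖z‖ ^ 2 - ‖⟪c, z⟫_𝕜‖ ^ 2 + ‖⟪c, z⟫_𝕜 - β‖ ^ 2 + (‖c‖ ^ 2 - 1) * ‖β‖ ^ 2 := by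
  rw [norm_sub_sq (𝕜 := 𝕜), norm_sub_sq (𝕜 := 𝕜), norm_smul, inner_smul_right,
    ← inner_conj_symm, RCLike.inner_apply]
  simp only [RCLike.mul_re, RCLike.conj_re, RCLike.conj_im]
  ring

section WeightedProx

variable {𝕜 V E : Type*} [RCLike 𝕜] [AddCommGroup V] [Module 𝕜 V] [Module ℝ V]
  [IsScalarTower ℝ 𝕜 V] [NormedAddCommGroup E] [InnerProductSpace 𝕜 E]

def IsProxMap (e : V →ₗ[𝕜] E) (f : V → ℝ) (P : V → V) : Prop :=
  ∀ v w, f (P v) + ‖e (P v - v)‖ ^ 2 / 2 ≤ f w + ‖e (w - v)‖ ^ 2 / 2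

def proxShiftMap (e : V →ₗ[𝕜] E) (P : V → V) (b x : V) (β : 𝕜) : 𝕜 :=
  ⟪e b, e (P (x + β • b) - x)⟫_𝕜

variable {e : V →ₗ[𝕜] E} {f : V → ℝ} {P : V → V} {b x : V}

theorem ConvexOn.le_add_re_inner_of_isProx (hf : ConvexOn ℝ univ f) {v p : V}
    (hp : ∀ w, f p + ‖e (p - v)‖ ^ 2 / 2 ≤ f w + ‖e (w - v)‖ ^ 2 / 2) (w : V) :
    f p ≤ f w + re ⟪e (p - v), e (w - p)⟫_𝕜 := by
  set y := e (p - v)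
  set z := e (w - p)
  have hsmall : ∀ θ ∈ Ioo (0 : ℝ) 1, f p - f w - re ⟪y, z⟫_𝕜 ≤ θ * (‖z‖ ^ 2 / 2) := by
    rintro θ ⟨hθ0, hθ1⟩
    have hconv := hf.2 (mem_univ p) (mem_univ w) (sub_nonneg.2 hθ1.le) hθ0.le (by ring)
    have hshift : e ((1 - θ) • p + θ • w - v) = y + (θ : 𝕜) • z := by
      rw [← map_smul, ← map_add, ← RCLike.real_smul_eq_coe_smul]
      congr 1
      rw [smul_sub, sub_smul, one_smul]
      abel
    have hmin := hp ((1 - θ) • p + θ • w)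
    rw [hshift, norm_add_sq (𝕜 := 𝕜), inner_smul_right, norm_smul, re_ofReal_mul, norm_ofReal,
      abs_of_pos hθ0] at hmin
    simp only [smul_eq_mul] at hconv
    have hscaled : θ * (f p - f w - re ⟪y, z⟫_𝕜 - θ * (‖z‖ ^ 2 / 2)) ≤ 0 := by nlinarith
    nlinarith [hscaled]
  have hlim : Tendsto (fun θ : ℝ => θ * (‖z‖ ^ 2 / 2)) (𝓝[>] 0) (𝓝 0) := by
    have := ((continuous_mul_const (‖z‖ ^ 2 / 2)).tendsto (0 : ℝ)).mono_left
      (nhdsWithin_le_nhds (s := Ioi 0))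
    rwa [zero_mul] at this
  linarith [ge_of_tendsto hlim (eventually_of_mem (Ioo_mem_nhdsGT one_pos) hsmall)]

theorem ConvexOn.add_norm_sq_le_of_isProx (hf : ConvexOn ℝ univ f) {v p : V}
    (hp : ∀ w, f p + ‖e (p - v)‖ ^ 2 / 2 ≤ f w + ‖e (w - v)‖ ^ 2 / 2) (w : V) :
    f p + ‖e (p - v)‖ ^ 2 / 2 + ‖e (w - p)‖ ^ 2 / 2 ≤ f w + ‖e (w - v)‖ ^ 2 / 2 := by
  have hvar := hf.le_add_re_inner_of_isProx hp w
  have hsplit : e (w - v) = e (p - v) + e (w - p) := by rw [← map_add, sub_add_sub_cancel']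
  rw [hsplit, norm_add_sq (𝕜 := 𝕜)]
  linarith

theorem ConvexOn.norm_sq_map_sub_le_re_inner_of_isProxMap (hf : ConvexOn ℝ univ f)
    (hP : IsProxMap e f P) (v₁ v₂ : V) :
    ‖e (P v₁ - P v₂)‖ ^ 2 ≤ re ⟪e (v₁ - v₂), e (P v₁ - P v₂)⟫_𝕜 := by
  have h₁ := hf.le_add_re_inner_of_isProx (hP v₁) (P v₂)
  have h₂ := hf.le_add_re_inner_of_isProx (hP v₂) (P v₁)
  rw [← inner_self_eq_norm_sq (𝕜 := 𝕜)]
  simp only [map_sub, inner_sub_left, inner_sub_right, map_sub] at h₁ h₂ ⊢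
  linarith [inner_re_symm (𝕜 := 𝕜) (e (P v₁)) (e (P v₂)),
    inner_re_symm (𝕜 := 𝕜) (e v₁) (e (P v₂)), inner_re_symm (𝕜 := 𝕜) (e v₂) (e (P v₁))]

theorem ConvexOn.norm_map_sub_le_of_isProxMap (hf : ConvexOn ℝ univ f)
    (hP : IsProxMap e f P) (v₁ v₂ : V) :
    ‖e (P v₁ - P v₂)‖ ≤ ‖e (v₁ - v₂)‖ := by
  have hfirm := hf.norm_sq_map_sub_le_re_inner_of_isProxMap hP v₁ v₂
  have hcs := re_inner_le_norm (𝕜 := 𝕜) (e (v₁ - v₂)) (e (P v₁ - P v₂))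
  nlinarith [norm_nonneg (e (P v₁ - P v₂)), norm_nonneg (e (v₁ - v₂))]

theorem ConvexOn.lipschitzWith_proxShiftMap (hf : ConvexOn ℝ univ f)
    (hP : IsProxMap e f P) :
    LipschitzWith (‖e b‖₊ ^ 2) (proxShiftMap e P b x) := by
  refine LipschitzWith.of_dist_le_mul fun β γ => ?_
  have hdiff : proxShiftMap e P b x β - proxShiftMap e P b x γ
      = ⟪e b, e (P (x + β • b) - P (x + γ • b))⟫_𝕜 := by
    simp only [proxShiftMap, ← inner_sub_right, ← map_sub, sub_sub_sub_cancel_right]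
  have hshift : e ((x + β • b) - (x + γ • b)) = (β - γ) • e b := by
    rw [add_sub_add_left_eq_sub, ← sub_smul, map_smul]
  rw [dist_eq_norm, dist_eq_norm, hdiff, NNReal.coe_pow, coe_nnnorm]
  calc ‖⟪e b, e (P (x + β • b) - P (x + γ • b))⟫_𝕜‖
      ≤ ‖e b‖ * ‖e (P (x + β • b) - P (x + γ • b))‖ := norm_inner_le_norm _ _
    _ ≤ ‖e b‖ * ‖e ((x + β • b) - (x + γ • b))‖ := by
      gcongr
      exact hf.norm_map_sub_le_of_isProxMap hP _ _
    _ = ‖e b‖ ^ 2 * ‖β - γ‖ := by rw [hshift, norm_smul]; ring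

theorem ConvexOn.existsUnique_proxShiftMap_eq (hf : ConvexOn ℝ univ f)
    (hP : IsProxMap e f P) (hb : ‖e b‖ < 1) :
    ∃! β : 𝕜, proxShiftMap e P b x β = β := by
  have hK : ‖e b‖₊ ^ 2 < 1 := pow_lt_one₀ zero_le (by exact_mod_cast hb) two_ne_zero
  have hcontr : ContractingWith _ (proxShiftMap e P b x) :=
    ⟨hK, hf.lipschitzWith_proxShiftMap hP⟩
  exact ⟨_, hcontr.fixedPoint_isFixedPt, fun β hβ => hcontr.fixedPoint_unique hβ⟩

theorem ConvexOn.objective_sub_rankOne_le_of_proxShiftMap_eq (hf : ConvexOn ℝ univ f)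
    (hP : IsProxMap e f P) (hb : ‖e b‖ ≤ 1) {β : 𝕜} (hβ : proxShiftMap e P b x β = β) (w : V) :
    f (P (x + β • b)) + (‖e (P (x + β • b) - x)‖ ^ 2
        - ‖⟪e b, e (P (x + β • b) - x)⟫_𝕜‖ ^ 2) / 2
      ≤ f w + (‖e (w - x)‖ ^ 2 - ‖⟪e b, e (w - x)⟫_𝕜‖ ^ 2) / 2 := by
  set p := P (x + β • b)
  have hthreePoint := hf.add_norm_sq_le_of_isProx (hP (x + β • b)) w
  have hsplit : ∀ z, e (z - (x + β • b)) = e (z - x) - β • e b := fun z => by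
    rw [← map_smul, ← map_sub, sub_add_eq_sub_sub]
  have hgap : ⟪e b, e (w - x)⟫_𝕜 - β = ⟪e b, e (w - p)⟫_𝕜 := by
    rw [← hβ, proxShiftMap, ← inner_sub_right, ← map_sub, sub_sub_sub_cancel_right]
  have hcs : ‖⟪e b, e (w - p)⟫_𝕜‖ ≤ ‖e (w - p)‖ :=
    (norm_inner_le_norm _ _).trans (mul_le_of_le_one_left (norm_nonneg _) hb)
  rw [proxShiftMap] at hβ
  rw [hsplit, hsplit, norm_sub_smul_sq_eq, norm_sub_smul_sq_eq, hgap, hβ, sub_self,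
    norm_zero] at hthreePoint
  rw [hβ]
  nlinarith [norm_nonneg ⟪e b, e (w - p)⟫_𝕜]

end WeightedProx

section DiagonalWeight

variable {ι : Type*} [Fintype ι] (d : ι → ℝ)

noncomputable def sqrtDiag : (ι → ℂ) →ₗ[ℂ] EuclideanSpace ℂ ι where
  toFun z := WithLp.toLp 2 fun i => (√(d i) : ℂ) * z i
  map_add' y z := by ext i; simp [mul_add]
  map_smul' c z := by ext i; simp [mul_left_comm]

variable {d} [DecidableEq ι]

theorem inner_sqrtDiag (hd : ∀ i, 0 ≤ d i) (y z : ι → ℂ) :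
    ⟪sqrtDiag d y, sqrtDiag d z⟫_ℂ = star y ⬝ᵥ diagonal (fun i => (d i : ℂ)) *ᵥ z := by
  simp only [sqrtDiag, LinearMap.coe_mk, AddHom.coe_mk, PiLp.inner_apply, RCLike.inner_apply,
    mulVec_diagonal, dotProduct, Pi.star_apply, map_mul, Complex.conj_ofReal, Complex.star_def]
  refine Finset.sum_congr rfl fun i _ => ?_
  have hsq : (√(d i) : ℂ) * √(d i) = d i := by
    rw [← Complex.ofReal_mul, Real.mul_self_sqrt (hd i)]
  linear_combination (z i * (starRingEnd ℂ) (y i)) * hsq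

theorem norm_sqrtDiag_sq (hd : ∀ i, 0 ≤ d i) (z : ι → ℂ) :
    ‖sqrtDiag d z‖ ^ 2 = (star z ⬝ᵥ diagonal (fun i => (d i : ℂ)) *ᵥ z).re := by
  rw [← inner_self_eq_norm_sq (𝕜 := ℂ), inner_sqrtDiag hd]
  rfl

theorem inner_sqrtDiag_inv_mulVec (hd : ∀ i, 0 < d i) (u z : ι → ℂ) :
    ⟪sqrtDiag d ((diagonal fun i => (d i : ℂ))⁻¹ *ᵥ u), sqrtDiag d z⟫_ℂ = star u ⬝ᵥ z := by
  set D := diagonal fun i => (d i : ℂ)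
  have hself : Dᴴ = D := by simp [D, diagonal_conjTranspose, Pi.star_def]
  have hunit : IsUnit D.det := by
    rw [det_diagonal]
    exact (Finset.prod_ne_zero_iff.2 fun i _ => by exact_mod_cast (hd i).ne').isUnit
  have hstar : star (D⁻¹ *ᵥ u) ᵥ* D = star (D *ᵥ (D⁻¹ *ᵥ u)) := by
    rw [star_mulVec D, hself]
  rw [inner_sqrtDiag fun i => (hd i).le, dotProduct_mulVec, hstar, mulVec_mulVec,
    mul_nonsing_inv D hunit, one_mulVec]

theorem re_dotProduct_diagonal_sub_vecMulVec (hd : ∀ i, 0 < d i) (u z : ι → ℂ) :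
    (star z ⬝ᵥ (diagonal (fun i => (d i : ℂ)) - vecMulVec u (star u)) *ᵥ z).re
      = ‖sqrtDiag d z‖ ^ 2
        - ‖⟪sqrtDiag d ((diagonal fun i => (d i : ℂ))⁻¹ *ᵥ u), sqrtDiag d z⟫_ℂ‖ ^ 2 := by
  rw [inner_sqrtDiag_inv_mulVec hd, norm_sqrtDiag_sq fun i => (hd i).le, sub_mulVec,
    dotProduct_sub, Complex.sub_re, vecMulVec_mulVec, dotProduct_smul, op_smul_eq_mul,
    star_dotProduct z u, Complex.star_def, Complex.conj_mul']
  norm_cast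

theorem norm_sqrtDiag_inv_mulVec_lt_one (hd : ∀ i, 0 < d i) {u : ι → ℂ}
    (hW : (diagonal (fun i => (d i : ℂ)) - vecMulVec u (star u)).PosDef) :
    ‖sqrtDiag d ((diagonal fun i => (d i : ℂ))⁻¹ *ᵥ u)‖ < 1 := by
  rcases eq_or_ne ((diagonal fun i => (d i : ℂ))⁻¹ *ᵥ u) 0 with hb | hb
  · simp [hb]
  have hpos := (Complex.pos_iff.1 (hW.dotProduct_mulVec_pos hb)).1
  rw [re_dotProduct_diagonal_sub_vecMulVec hd, inner_self_eq_norm_sq_to_K, norm_pow,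
    RCLike.norm_ofReal, abs_norm] at hpos
  by_contra! hge
  nlinarith [one_le_pow₀ (n := 2) hge]

end DiagonalWeight

section ProxObj

variable {N : ℕ} {d : Fin N → ℝ} (lam : ℝ) (h : (Fin N → ℂ) → ℝ)

theorem proxObj_diagonal (hd : ∀ i, 0 ≤ d i) (v w : Fin N → ℂ) :
    proxObj (diagonal fun i => (d i : ℂ)) lam h v w
      = lam * h w + ‖sqrtDiag d (w - v)‖ ^ 2 / 2 := by
  rw [proxObj, norm_sqrtDiag_sq hd]
  ring

theorem proxObj_diagonal_sub_vecMulVec (hd : ∀ i, 0 < d i) (u x w : Fin N → ℂ) :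
    proxObj (diagonal (fun i => (d i : ℂ)) - vecMulVec u (star u)) lam h x w
      = lam * h w + (‖sqrtDiag d (w - x)‖ ^ 2
          - ‖⟪sqrtDiag d ((diagonal fun i => (d i : ℂ))⁻¹ *ᵥ u), sqrtDiag d (w - x)⟫_ℂ‖ ^ 2)
        / 2 := by
  rw [proxObj, re_dotProduct_diagonal_sub_vecMulVec hd]
  ring

end ProxObj

theorem stmt_6_general {N : ℕ} (d : Fin N → ℝ) (hd : ∀ i, 0 < d i)
    (u x : Fin N → ℂ) (lam : ℝ) (hlam : 0 < lam)
    (h : (Fin N → ℂ) → ℝ) (hconv : ConvexOn ℝ Set.univ h)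
    (D : Matrix (Fin N) (Fin N) ℂ) (hD : D = Matrix.diagonal fun i => (d i : ℂ))
    (W : Matrix (Fin N) (Fin N) ℂ) (hW : W = D - Matrix.vecMulVec u (star u))
    (hWpd : W.PosDef)
    (proxD : (Fin N → ℂ) → (Fin N → ℂ))
    (hproxDmin : ∀ v w, proxObj D lam h v (proxD v) ≤ proxObj D lam h v w) :
    (∃! β : ℂ,
        dotProduct (star u) (x - proxD (x + β • D⁻¹.mulVec u)) + β = 0) ∧
      ∀ β : ℂ,
        dotProduct (star u) (x - proxD (x + β • D⁻¹.mulVec u)) + β = 0 →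
        ∀ w, proxObj W lam h x (proxD (x + β • D⁻¹.mulVec u)) ≤ proxObj W lam h x w := by
  subst hW hD
  have hf : ConvexOn ℝ univ fun w => lam * h w := hconv.smul hlam.le
  have hP : IsProxMap (sqrtDiag d) (fun w => lam * h w) proxD := fun v w => by
    simpa only [proxObj_diagonal lam h fun i => (hd i).le] using hproxDmin v w
  have hb := norm_sqrtDiag_inv_mulVec_lt_one hd hWpd
  have hJ : ∀ β : ℂ,
      star u ⬝ᵥ (x - proxD (x + β • (diagonal fun i => (d i : ℂ))⁻¹ *ᵥ u)) + β = 0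
        ↔ proxShiftMap (sqrtDiag d) proxD ((diagonal fun i => (d i : ℂ))⁻¹ *ᵥ u) x β = β :=
    fun β => by
      rw [proxShiftMap, inner_sqrtDiag_inv_mulVec hd, ← neg_sub, dotProduct_neg, neg_add_eq_zero]
  refine ⟨?_, fun β hβ w => ?_⟩
  · simpa only [hJ] using hf.existsUnique_proxShiftMap_eq hP hb
  · rw [proxObj_diagonal_sub_vecMulVec lam h hd, proxObj_diagonal_sub_vecMulVec lam h hd]
    exact hf.objective_sub_rankOne_le_of_proxShiftMap_eq hP hb.le ((hJ β).1 hβ) w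

/-- Becker's theorem (here with `W = D − uuᴴ` positive definite): the map
`J(β) = uᴴ(x − prox_{λh}^D(x + D⁻¹uβ)) + β` has a unique zero `β*`, and
`prox_{λh}^W(x) = prox_{λh}^D(x + D⁻¹uβ*)`. -/
theorem stmt_6 {N : ℕ} (d : Fin N → ℝ) (hd : ∀ i, 0 < d i)
    (u x : Fin N → ℂ) (lam : ℝ) (hlam : 0 < lam)
    (h : (Fin N → ℂ) → ℝ) (hconv : ConvexOn ℝ Set.univ h)
    (hlsc : LowerSemicontinuous h)
    (D : Matrix (Fin N) (Fin N) ℂ) (hD : D = Matrix.diagonal fun i => (d i : ℂ))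
    (W : Matrix (Fin N) (Fin N) ℂ) (hW : W = D - Matrix.vecMulVec u (star u))
    (hWpd : W.PosDef)
    (proxD : (Fin N → ℂ) → (Fin N → ℂ))
    (hproxDmin : ∀ v w, proxObj D lam h v (proxD v) ≤ proxObj D lam h v w)
    (hproxDuniq : ∀ v w, (∀ w', proxObj D lam h v w ≤ proxObj D lam h v w') →
      w = proxD v) :
    (∃! β : ℂ,
        dotProduct (star u) (x - proxD (x + β • D⁻¹.mulVec u)) + β = 0) ∧
      ∀ β : ℂ,
        dotProduct (star u) (x - proxD (x + β • D⁻¹.mulVec u)) + β = 0 →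
        ∀ w, proxObj W lam h x (proxD (x + β • D⁻¹.mulVec u)) ≤ proxObj W lam h x w :=
  stmt_6_general d hd u x lam hlam h hconv D hD W hW hWpd proxD hproxDmin
end

section
/- For a complex matrix X ∈ ℂ^{I×J} with the zero Neumann boundary convention, the anisotropic total variation satisfies TV_{ℓ1}(X) = max over pairs (P,Q) with P ∈ ℂ^{(I−1)×J}, Q ∈ ℂ^{I×(J−1)}, |P_{i,j}| ≤ 1 and |Q_{i,j}| ≤ 1 for all i,j, of Re⟨L(P,Q), X⟩ = Re{vec(L(P,Q))ᴴ vec(X)}. -/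
open scoped ComplexConjugate
open Finset

/-!
Summation by parts along columns and rows, where the zero boundary conventions kill the boundary
terms, turns `Re⟨L(P,Q), X⟩` into `Re⟨P, ∂ᵢX⟩ + Re⟨Q, ∂ⱼX⟩` with the forward differences
`∂ᵢX = X i j - X (i+1) j` and `∂ⱼX = X i j - X i (j+1)`. Each summand `Re (conj p * w)` is at most
`‖w‖` when `‖p‖ ≤ 1`, with equality for the phase `p = w / ‖w‖`; regrouping the two sums of
`‖∂X‖` into interior and boundary terms gives `TV_{ℓ1}(X)`.
-/

theorem sum_Icc_one_eq_sum_Icc_sub_one_add {M : Type*} [AddCommMonoid M] {n : ℕ} (hn : 1 ≤ n)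
    (f : ℕ → M) : ∑ i ∈ Icc 1 n, f i = ∑ i ∈ Icc 1 (n - 1), f i + f n := by
  obtain ⟨m, rfl⟩ := Nat.exists_eq_add_of_le' hn
  simp [sum_Icc_succ_top]

theorem sum_Icc_by_parts {R : Type*} [CommRing R] {n : ℕ} (hn : 1 ≤ n) (p x : ℕ → R) :
    ∑ i ∈ Icc 1 n, (p i - p (i - 1)) * x i =
      ∑ i ∈ Icc 1 (n - 1), p i * (x i - x (i + 1)) + p n * x n - p 0 * x 1 := by
  induction n, hn using Nat.le_induction with
  | base => simp [sub_mul]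
  | succ n hn ih =>
    rw [sum_Icc_succ_top (by omega), ih, Nat.add_sub_cancel,
      sum_Icc_one_eq_sum_Icc_sub_one_add hn (fun i => p i * (x i - x (i + 1)))]
    ring

theorem sum_Icc_by_parts_of_support {R : Type*} [CommRing R] {n : ℕ} (hn : 1 ≤ n) {p : ℕ → R}
    (hp : ∀ i, p i ≠ 0 → 1 ≤ i ∧ i ≤ n - 1) (x : ℕ → R) :
    ∑ i ∈ Icc 1 n, (p i - p (i - 1)) * x i = ∑ i ∈ Icc 1 (n - 1), p i * (x i - x (i + 1)) := by
  have h0 : p 0 = 0 := by_contra fun h => by have := hp 0 h; omega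
  have hpn : p n = 0 := by_contra fun h => by have := hp n h; omega
  rw [sum_Icc_by_parts hn, h0, hpn]
  ring

theorem re_conj_mul_le_norm {p : ℂ} (hp : ‖p‖ ≤ 1) (z : ℂ) : (conj p * z).re ≤ ‖z‖ :=
  calc (conj p * z).re ≤ ‖conj p * z‖ := Complex.re_le_norm _
    _ = ‖p‖ * ‖z‖ := by rw [norm_mul, RCLike.norm_conj]
    _ ≤ ‖z‖ := mul_le_of_le_one_left (norm_nonneg _) hp

-- Also at `z = 0`, where `z / ‖z‖ = 0`.
theorem conj_div_norm_mul_self (z : ℂ) : conj (z / ‖z‖) * z = ‖z‖ := by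
  rw [map_div₀, Complex.conj_ofReal, div_mul_eq_mul_div, Complex.conj_mul', sq, mul_self_div_self]

theorem sum_Icc_add_sum_Icc_eq_interior_add_boundary {M : Type*} [AddCommMonoid M] {I J : ℕ}
    (hI : 1 ≤ I) (hJ : 1 ≤ J) (v h : ℕ → ℕ → M) :
    ∑ i ∈ Icc 1 (I - 1), ∑ j ∈ Icc 1 J, v i j + ∑ i ∈ Icc 1 I, ∑ j ∈ Icc 1 (J - 1), h i j =
      ∑ i ∈ Icc 1 (I - 1), ∑ j ∈ Icc 1 (J - 1), (v i j + h i j) +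
        ∑ i ∈ Icc 1 (I - 1), v i J + ∑ j ∈ Icc 1 (J - 1), h I j := by
  simp only [sum_Icc_one_eq_sum_Icc_sub_one_add hJ (v _),
    sum_Icc_one_eq_sum_Icc_sub_one_add hI (fun i => ∑ j ∈ Icc 1 (J - 1), h i j), sum_add_distrib]
  abel

theorem sum_conj_divergence_mul_eq {R : Type*} [CommRing R] [StarRing R] {I J : ℕ} (hI : 1 ≤ I)
    (hJ : 1 ≤ J) {P Q : ℕ → ℕ → R}
    (hP : ∀ i j, P i j ≠ 0 → 1 ≤ i ∧ i ≤ I - 1 ∧ 1 ≤ j ∧ j ≤ J)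
    (hQ : ∀ i j, Q i j ≠ 0 → 1 ≤ i ∧ i ≤ I ∧ 1 ≤ j ∧ j ≤ J - 1) (X : ℕ → ℕ → R) :
    ∑ i ∈ Icc 1 I, ∑ j ∈ Icc 1 J, conj (P i j + Q i j - P (i - 1) j - Q i (j - 1)) * X i j =
      ∑ i ∈ Icc 1 (I - 1), ∑ j ∈ Icc 1 J, conj (P i j) * (X i j - X (i + 1) j) +
        ∑ i ∈ Icc 1 I, ∑ j ∈ Icc 1 (J - 1), conj (Q i j) * (X i j - X i (j + 1)) :=
  calc _ = ∑ i ∈ Icc 1 I, ∑ j ∈ Icc 1 J, (conj (P i j) - conj (P (i - 1) j)) * X i j +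
        ∑ i ∈ Icc 1 I, ∑ j ∈ Icc 1 J, (conj (Q i j) - conj (Q i (j - 1))) * X i j := by
        simp only [← sum_add_distrib, map_add, map_sub]
        exact sum_congr rfl fun i _ => sum_congr rfl fun j _ => by ring
    _ = _ := by
        congr 1
        · rw [sum_comm, sum_comm (s := Icc 1 (I - 1))]
          exact sum_congr rfl fun j _ => sum_Icc_by_parts_of_support hI
            (fun i h => (hP i j (star_ne_zero.1 h)).imp_right And.left) _
        · exact sum_congr rfl fun i _ => sum_Icc_by_parts_of_support hJ
            (fun j h => (hQ i j (star_ne_zero.1 h)).2.2) _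

theorem sum_sum_conj_ite_div_norm_mul {ι κ : Type*} [DecidableEq ι] [DecidableEq κ]
    (s : Finset ι) (t : Finset κ) (w : ι → κ → ℂ) :
    ∑ i ∈ s, ∑ j ∈ t, conj (if i ∈ s ∧ j ∈ t then w i j / ‖w i j‖ else 0) * w i j =
      (∑ i ∈ s, ∑ j ∈ t, ‖w i j‖ : ℝ) := by
  push_cast
  exact sum_congr rfl fun i hi => sum_congr rfl fun j hj => by
    rw [if_pos ⟨hi, hj⟩, conj_div_norm_mul_self]

/-- Dual characterization of the anisotropic total variation: `TV_{ℓ1}(X)` equals the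
maximum of `Re⟨L(P,Q), X⟩ = Re{vec(L(P,Q))ᴴ vec(X)}` over pairs `(P,Q)` with all
entries of modulus at most `1` (and the zero boundary conventions), where
`L(P,Q)_{i,j} = P_{i,j} + Q_{i,j} − P_{i−1,j} − Q_{i,j−1}` (1-based indexing). -/
theorem stmt_9 (I J : ℕ) (hI : 1 ≤ I) (hJ : 1 ≤ J) (X : ℕ → ℕ → ℂ) :
    IsGreatest
      {r : ℝ | ∃ P Q : ℕ → ℕ → ℂ,
        (∀ i j, P i j ≠ 0 → 1 ≤ i ∧ i ≤ I - 1 ∧ 1 ≤ j ∧ j ≤ J) ∧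
        (∀ i j, Q i j ≠ 0 → 1 ≤ i ∧ i ≤ I ∧ 1 ≤ j ∧ j ≤ J - 1) ∧
        (∀ i j, ‖P i j‖ ≤ 1) ∧ (∀ i j, ‖Q i j‖ ≤ 1) ∧
        r = (∑ i ∈ Finset.Icc 1 I, ∑ j ∈ Finset.Icc 1 J,
              conj (P i j + Q i j - P (i - 1) j - Q i (j - 1)) * X i j).re}
      ((∑ i ∈ Finset.Icc 1 (I - 1), ∑ j ∈ Finset.Icc 1 (J - 1),
          (‖X i j - X (i + 1) j‖ + ‖X i j - X i (j + 1)‖)) +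
        (∑ i ∈ Finset.Icc 1 (I - 1), ‖X i J - X (i + 1) J‖) +
        ∑ j ∈ Finset.Icc 1 (J - 1), ‖X I j - X I (j + 1)‖) := by
  rw [← sum_Icc_add_sum_Icc_eq_interior_add_boundary hI hJ (fun i j => ‖X i j - X (i + 1) j‖)
    (fun i j => ‖X i j - X i (j + 1)‖)]
  constructor
  · set P : ℕ → ℕ → ℂ := fun i j => if i ∈ Icc 1 (I - 1) ∧ j ∈ Icc 1 J then
      (X i j - X (i + 1) j) / ‖X i j - X (i + 1) j‖ else 0
    set Q : ℕ → ℕ → ℂ := fun i j => if i ∈ Icc 1 I ∧ j ∈ Icc 1 (J - 1) then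
      (X i j - X i (j + 1)) / ‖X i j - X i (j + 1)‖ else 0
    have hP : ∀ i j, P i j ≠ 0 → 1 ≤ i ∧ i ≤ I - 1 ∧ 1 ≤ j ∧ j ≤ J := fun i j h => by
      simpa only [mem_Icc, and_assoc] using of_not_not fun hc => h (if_neg hc)
    have hQ : ∀ i j, Q i j ≠ 0 → 1 ≤ i ∧ i ≤ I ∧ 1 ≤ j ∧ j ≤ J - 1 := fun i j h => by
      simpa only [mem_Icc, and_assoc] using of_not_not fun hc => h (if_neg hc)
    refine ⟨P, Q, hP, hQ, fun i j => ?_, fun i j => ?_, ?_⟩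
    · unfold P; split_ifs <;> simp [div_self_le_one]
    · unfold Q; split_ifs <;> simp [div_self_le_one]
    rw [sum_conj_divergence_mul_eq hI hJ hP hQ, sum_sum_conj_ite_div_norm_mul,
      sum_sum_conj_ite_div_norm_mul, ← Complex.ofReal_add, Complex.ofReal_re]
  · rintro r ⟨P, Q, hP, hQ, hPn, hQn, rfl⟩
    rw [sum_conj_divergence_mul_eq hI hJ hP hQ, Complex.add_re]
    simp only [Complex.re_sum]
    gcongr with i _ j _ i _ j _
    · exact re_conj_mul_le_norm (hPn i j) _
    · exact re_conj_mul_le_norm (hQn i j) _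
end

section
/- Let B be Hermitian positive definite, v ∈ ℂᴺ, λ̄ > 0, and h a convex function expressible as h(x) = max_{d ∈ D} Re⟨c(d), x⟩ over a compact convex set D with c linear. Then the minimizer of F(x) = ‖x − v‖²_B + 2λ̄ h(x) equals x* = v − λ̄ B⁻¹ c(d*) where d* minimizes ‖v − λ̄ B⁻¹ c(d)‖²_B over d ∈ D. -/
/-!
Minimality of `d*` along the segments of `D` through `d*` gives the first-order condition
`Re⟨c d, x*⟩ ≤ Re⟨c d*, x*⟩` for all `d ∈ D`, so the maximum defining `h x*` is attained at `d*`.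
Since `h x ≥ Re⟨c d*, x⟩` for every `x`, the quadratic `‖x - v‖²_B + 2λ̄ Re⟨c d*, x⟩` minorises
`F` and agrees with it at `x*`; completing the square shows `x* = v - λ̄ B⁻¹ c(d*)` minimises it.
-/

open RCLike Set Filter Topology
open scoped InnerProductSpace

theorem nonneg_of_forall_mem_Ioc_nonneg_add_mul {α β : ℝ}
    (h : ∀ t ∈ Ioc (0 : ℝ) 1, 0 ≤ α + t * β) : 0 ≤ α := by
  have hlim : Tendsto (fun t : ℝ => α + t * β) (𝓝[>] 0) (𝓝 α) := by
    have hcont : Continuous fun t : ℝ => α + t * β := by fun_prop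
    exact (hcont.tendsto' 0 α (by simp)).mono_left nhdsWithin_le_nhds
  exact ge_of_tendsto hlim (eventually_of_mem (Ioc_mem_nhdsGT one_pos) h)

namespace ContinuousLinearMap

variable {𝕜 E : Type*} [RCLike 𝕜] [NormedAddCommGroup E] [InnerProductSpace 𝕜 E]

theorem reApplyInnerSelf_add {B : E →L[𝕜] E} (hB : (B : E →ₗ[𝕜] E).IsSymmetric) (a b : E) :
    B.reApplyInnerSelf (a + b) =
      B.reApplyInnerSelf a + 2 * re ⟪B a, b⟫_𝕜 + B.reApplyInnerSelf b := by
  have hswap : re ⟪B b, a⟫_𝕜 = re ⟪B a, b⟫_𝕜 := by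
    rw [← coe_coe B, hB b a, inner_re_symm]
  simp only [reApplyInnerSelf_apply, map_add, inner_add_left, inner_add_right, hswap]
  ring

variable [Module ℝ E] [IsScalarTower ℝ 𝕜 E]

theorem re_inner_apply_smul_of_rightInverse {B Binv : E →L[𝕜] E}
    (hB : (B : E →ₗ[𝕜] E).IsSymmetric) (hBinv : Function.RightInverse Binv B) (x u : E) (r : ℝ) :
    re ⟪B x, r • Binv u⟫_𝕜 = r * re ⟪u, x⟫_𝕜 := by
  rw [real_smul_eq_coe_smul (K := 𝕜), inner_smul_real_right, ← coe_coe B, hB x, coe_coe,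
    hBinv u, smul_re, inner_re_symm]

theorem IsPositive.re_inner_le_of_isMinOn {B : E →L[𝕜] E} (hB : B.IsPositive) {S : Set E}
    (hS : Convex ℝ S) {v y₀ : E} (hy₀ : y₀ ∈ S)
    (hmin : IsMinOn (fun y => B.reApplyInnerSelf (v - y)) S y₀) {y : E} (hy : y ∈ S) :
    re ⟪B (v - y₀), y⟫_𝕜 ≤ re ⟪B (v - y₀), y₀⟫_𝕜 := by
  set a := v - y₀
  set b := y₀ - y
  have hslope : ∀ t ∈ Ioc (0 : ℝ) 1, 0 ≤ 2 * re ⟪B a, b⟫_𝕜 + t * B.reApplyInnerSelf b := by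
    rintro t ⟨ht0, ht1⟩
    have hmem : y₀ + t • (y - y₀) ∈ S := hS.add_smul_sub_mem hy₀ hy ⟨ht0.le, ht1⟩
    have hpt : v - (y₀ + t • (y - y₀)) = a + (t : 𝕜) • b := by
      rw [← real_smul_eq_coe_smul (K := 𝕜)]; module
    have hle := isMinOn_iff.1 hmin _ hmem
    rw [hpt, reApplyInnerSelf_add hB.isSymmetric, reApplyInnerSelf_smul, norm_algebraMap',
      Real.norm_of_nonneg ht0.le, inner_smul_real_right, smul_re] at hle
    exact nonneg_of_mul_nonneg_right (by nlinarith) ht0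
  have hderiv := nonneg_of_forall_mem_Ioc_nonneg_add_mul hslope
  rw [inner_sub_right, map_sub] at hderiv
  linarith

theorem IsPositive.reApplyInnerSelf_sub_add_re_inner_le {B Binv : E →L[𝕜] E}
    (hB : B.IsPositive) (hBinv : Function.RightInverse Binv B) (u v x : E) (r : ℝ) :
    B.reApplyInnerSelf (v - r • Binv u - v) + 2 * r * re ⟪u, v - r • Binv u⟫_𝕜 ≤
      B.reApplyInnerSelf (x - v) + 2 * r * re ⟪u, x⟫_𝕜 := by
  set xs := v - r • Binv u
  have hstep : xs - v = (-r) • Binv u := by module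
  have hexp : B.reApplyInnerSelf (x - v) = B.reApplyInnerSelf (x - xs) +
      2 * re ⟪B (x - xs), xs - v⟫_𝕜 + B.reApplyInnerSelf (xs - v) := by
    rw [← reApplyInnerSelf_add hB.isSymmetric, sub_add_sub_cancel]
  have hcross : re ⟪B (x - xs), xs - v⟫_𝕜 = -r * (re ⟪u, x⟫_𝕜 - re ⟪u, xs⟫_𝕜) := by
    rw [hstep, re_inner_apply_smul_of_rightInverse hB.isSymmetric hBinv, inner_sub_right,
      map_sub]
  linarith [hB.2 (x - xs)]

end ContinuousLinearMap

open ContinuousLinearMap in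
theorem stmt_12_general {N : ℕ} {G : Type*} [NormedAddCommGroup G] [NormedSpace ℝ G]
    (D : Set G) (hDconv : Convex ℝ D)
    (c : G →L[ℝ] EuclideanSpace ℂ (Fin N))
    (B Binv : EuclideanSpace ℂ (Fin N) →L[ℂ] EuclideanSpace ℂ (Fin N))
    (hB : IsSelfAdjoint B)
    (hBpos : ∀ q : EuclideanSpace ℂ (Fin N), q ≠ 0 → 0 < (@inner ℂ _ _ (B q) q).re)
    (hBinv : ∀ q, Binv (B q) = q ∧ B (Binv q) = q)
    (v : EuclideanSpace ℂ (Fin N)) (lam : ℝ) (hlam : 0 < lam)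
    (h : EuclideanSpace ℂ (Fin N) → ℝ)
    (hh : ∀ x, IsGreatest {r : ℝ | ∃ d ∈ D, r = (@inner ℂ _ _ (c d) x).re} (h x))
    (dstar : G) (hdstar : dstar ∈ D)
    (hdmin : ∀ d ∈ D,
      (@inner ℂ _ _ (B (v - lam • Binv (c dstar))) (v - lam • Binv (c dstar))).re ≤
        (@inner ℂ _ _ (B (v - lam • Binv (c d))) (v - lam • Binv (c d))).re) :
    ∀ x : EuclideanSpace ℂ (Fin N),
      (@inner ℂ _ _ (B (v - lam • Binv (c dstar) - v)) (v - lam • Binv (c dstar) - v)).re +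
          2 * lam * h (v - lam • Binv (c dstar)) ≤
        (@inner ℂ _ _ (B (x - v)) (x - v)).re + 2 * lam * h x := by
  intro x
  have hBP : B.IsPositive := by
    refine ⟨hB.isSymmetric, fun q => ?_⟩
    rcases eq_or_ne q 0 with rfl | hq
    · simp [reApplyInnerSelf_apply]
    · exact (hBpos q hq).le
  have hBBinv : Function.RightInverse Binv B := fun q => (hBinv q).2
  set f : G →L[ℝ] EuclideanSpace ℂ (Fin N) := lam • (Binv.restrictScalars ℝ).comp c
  have hf : ∀ d, f d = lam • Binv (c d) := fun d => rfl
  have hattain : ∀ d ∈ D, re ⟪c d, v - f dstar⟫_ℂ ≤ re ⟪c dstar, v - f dstar⟫_ℂ := by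
    intro d hd
    have hproj := hBP.re_inner_le_of_isMinOn (hDconv.linear_image f.toLinearMap)
      (mem_image_of_mem f hdstar) (isMinOn_iff.2 (forall_mem_image.2 hdmin))
      (mem_image_of_mem f hd)
    rw [hf d, re_inner_apply_smul_of_rightInverse hB.isSymmetric hBBinv, hf dstar,
      re_inner_apply_smul_of_rightInverse hB.isSymmetric hBBinv] at hproj
    exact le_of_mul_le_mul_left hproj hlam
  have hhxs : h (v - f dstar) = re ⟪c dstar, v - f dstar⟫_ℂ :=
    (hh _).unique ⟨⟨dstar, hdstar, rfl⟩, by rintro _ ⟨d, hd, rfl⟩; exact hattain d hd⟩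
  have hhx : re ⟪c dstar, x⟫_ℂ ≤ h x := (hh x).2 ⟨dstar, hdstar, rfl⟩
  have hopt := hBP.reApplyInnerSelf_sub_add_re_inner_le hBBinv (c dstar) v x lam
  rw [← hf] at hopt
  change B.reApplyInnerSelf (v - f dstar - v) + 2 * lam * h (v - f dstar) ≤
    B.reApplyInnerSelf (x - v) + 2 * lam * h x
  rw [hhxs]
  linarith [mul_le_mul_of_nonneg_left hhx (by positivity : 0 ≤ 2 * lam)]

/-- Abstract dual formulation underlying Proposition 1: for `B` Hermitian positive
definite with inverse `Binv`, `v ∈ ℂᴺ`, `λ̄ > 0`, and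
`h(x) = max_{d ∈ D} Re⟨c(d), x⟩` over a nonempty compact convex set `D` with `c`
(real-)linear and continuous, the minimizer of `F(x) = ‖x − v‖²_B + 2λ̄ h(x)` is
`x* = v − λ̄ B⁻¹ c(d*)`, where `d*` minimizes `‖v − λ̄ B⁻¹ c(d)‖²_B` over `d ∈ D`. -/
theorem stmt_12 {N : ℕ} {G : Type*} [NormedAddCommGroup G] [NormedSpace ℝ G]
    (D : Set G) (hDc : IsCompact D) (hDconv : Convex ℝ D) (hDne : D.Nonempty)
    (c : G →L[ℝ] EuclideanSpace ℂ (Fin N))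
    (B Binv : EuclideanSpace ℂ (Fin N) →L[ℂ] EuclideanSpace ℂ (Fin N))
    (hB : IsSelfAdjoint B)
    (hBpos : ∀ q : EuclideanSpace ℂ (Fin N), q ≠ 0 → 0 < (@inner ℂ _ _ (B q) q).re)
    (hBinv : ∀ q, Binv (B q) = q ∧ B (Binv q) = q)
    (v : EuclideanSpace ℂ (Fin N)) (lam : ℝ) (hlam : 0 < lam)
    (h : EuclideanSpace ℂ (Fin N) → ℝ)
    (hh : ∀ x, IsGreatest {r : ℝ | ∃ d ∈ D, r = (@inner ℂ _ _ (c d) x).re} (h x))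
    (dstar : G) (hdstar : dstar ∈ D)
    (hdmin : ∀ d ∈ D,
      (@inner ℂ _ _ (B (v - lam • Binv (c dstar))) (v - lam • Binv (c dstar))).re ≤
        (@inner ℂ _ _ (B (v - lam • Binv (c d))) (v - lam • Binv (c d))).re) :
    ∀ x : EuclideanSpace ℂ (Fin N),
      (@inner ℂ _ _ (B (v - lam • Binv (c dstar) - v)) (v - lam • Binv (c dstar) - v)).re +
          2 * lam * h (v - lam • Binv (c dstar)) ≤
        (@inner ℂ _ _ (B (x - v)) (x - v)).re + 2 * lam * h x :=
  stmt_12_general D hDconv c B Binv hB hBpos hBinv v lam hlam h hh dstar hdstar hdmin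
end

section
/- Let W be Hermitian positive definite with smallest eigenvalue σ and largest eigenvalue Σ. Then for any proper closed convex function h and any x₁, x₂, the weighted proximal mapping satisfies ‖prox_h^W(x₁) − prox_h^W(x₂)‖ ≤ (Σ/σ)·‖x₁ − x₂‖; in particular prox_h^W is Lipschitz continuous. -/
/-!
The proximal point `p` of `x` satisfies the variational inequality
`h p - h v ≤ re ⟪W (p - x), v - p⟫` (compare `p` with `p + t (v - p)` and let `t → 0`).
Adding the two inequalities for `(x₁, p₁)` and `(x₂, p₂)` gives firm nonexpansiveness in the
`W`-seminorm, `‖p₁ - p₂‖²_W ≤ re ⟪W (x₁ - x₂), p₁ - p₂⟫`, hence `‖p₁ - p₂‖_W ≤ ‖x₁ - x₂‖_W`,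
and `σ ‖q‖² ≤ ‖q‖²_W ≤ Σ ‖q‖²` converts this into `‖p₁ - p₂‖ ≤ (Σ / σ) ‖x₁ - x₂‖`.
-/

open Filter Topology Set RCLike
open scoped InnerProductSpace

theorem ConvexOn.sub_le_of_isMinOn_add {E : Type*} [AddCommGroup E] [Module ℝ E]
    {h φ : E → ℝ} (hconv : ConvexOn ℝ univ h) {p v : E} {B C : ℝ}
    (hmin : IsMinOn (fun u => h u + φ u) univ p)
    (hφ : ∀ t : ℝ, φ (p + t • (v - p)) = φ p + t * B + t ^ 2 * C) :
    h p - h v ≤ B := by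
  have hlim : Tendsto (fun t : ℝ => B + t * C) (𝓝[>] 0) (𝓝 B) :=
    ((by fun_prop : Continuous fun t : ℝ => B + t * C).tendsto' 0 B (by simp)).mono_left
      nhdsWithin_le_nhds
  refine ge_of_tendsto hlim ?_
  filter_upwards [Ioc_mem_nhdsGT one_pos] with t ⟨ht0, ht1⟩
  have hseg : h (p + t • (v - p)) ≤ (1 - t) * h p + t * h v := by
    rw [show p + t • (v - p) = (1 - t) • p + t • v by module]
    exact hconv.2 (mem_univ p) (mem_univ v) (sub_nonneg.2 ht1) ht0.le (sub_add_cancel 1 t)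
  have hmin_t := isMinOn_univ_iff.1 hmin (p + t • (v - p))
  rw [hφ] at hmin_t
  nlinarith

theorem le_div_mul_of_mul_sq_le {σ S a b : ℝ} (hσ : 0 < σ) (ha : 0 ≤ a) (hb : 0 ≤ b)
    (hab : σ * a ^ 2 ≤ S * b ^ 2) (hσS : σ * b ^ 2 ≤ S * b ^ 2) : a ≤ S / σ * b := by
  rw [div_mul_eq_mul_div, le_div_iff₀ hσ]
  rcases hb.eq_or_lt with rfl | hb
  · nlinarith
  have hS : σ ≤ S := le_of_mul_le_mul_right hσS (by positivity)
  refine (pow_le_pow_iff_left₀ (by positivity) (by nlinarith) two_ne_zero).1 ?_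
  calc (a * σ) ^ 2 = σ * (σ * a ^ 2) := by ring
    _ ≤ σ * (S * b ^ 2) := by gcongr
    _ ≤ S * (S * b ^ 2) := by gcongr; nlinarith
    _ = (S * b) ^ 2 := by ring

section WeightedProx

variable {𝕜 E : Type*} [RCLike 𝕜] [NormedAddCommGroup E] [InnerProductSpace 𝕜 E]

namespace LinearMap.IsSymmetric

variable {T : E →ₗ[𝕜] E}

theorem re_inner_comm (hT : T.IsSymmetric) (a b : E) : re ⟪T a, b⟫_𝕜 = re ⟪T b, a⟫_𝕜 := by
  rw [hT a b, inner_re_symm]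

theorem re_inner_add_smul [Module ℝ E] [IsScalarTower ℝ 𝕜 E] (hT : T.IsSymmetric)
    (a c : E) (t : ℝ) :
    re ⟪T (a + t • c), a + t • c⟫_𝕜 =
      re ⟪T a, a⟫_𝕜 + t * (2 * re ⟪T a, c⟫_𝕜) + t ^ 2 * re ⟪T c, c⟫_𝕜 := by
  simp only [RCLike.real_smul_eq_coe_smul (K := 𝕜), map_add, map_smul, inner_add_left,
    inner_add_right, inner_smul_left, inner_smul_right, RCLike.conj_ofReal, RCLike.re_ofReal_mul]
  rw [hT.re_inner_comm c a]
  ring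

end LinearMap.IsSymmetric

/-- `p = prox_h^T(x)`. -/
def IsWeightedProx (T : E →ₗ[𝕜] E) (h : E → ℝ) (x p : E) : Prop :=
  IsMinOn (fun u => h u + 1 / 2 * re ⟪T (u - x), u - x⟫_𝕜) univ p

namespace IsWeightedProx

variable [Module ℝ E] [IsScalarTower ℝ 𝕜 E] {T : E →ₗ[𝕜] E} {h : E → ℝ}

theorem sub_le_re_inner (hT : T.IsSymmetric) (hconv : ConvexOn ℝ univ h) {x p : E}
    (hp : IsWeightedProx T h x p) (v : E) : h p - h v ≤ re ⟪T (p - x), v - p⟫_𝕜 :=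
  hconv.sub_le_of_isMinOn_add (C := 1 / 2 * re ⟪T (v - p), v - p⟫_𝕜) hp fun t => by
    rw [add_sub_right_comm, hT.re_inner_add_smul]
    ring

theorem re_inner_sub_le (hT : T.IsSymmetric) (hconv : ConvexOn ℝ univ h) {x₁ x₂ p₁ p₂ : E}
    (hp₁ : IsWeightedProx T h x₁ p₁) (hp₂ : IsWeightedProx T h x₂ p₂) :
    re ⟪T (p₁ - p₂), p₁ - p₂⟫_𝕜 ≤ re ⟪T (x₁ - x₂), p₁ - p₂⟫_𝕜 := by
  have h₁ := hp₁.sub_le_re_inner hT hconv p₂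
  have h₂ := hp₂.sub_le_re_inner hT hconv p₁
  rw [← neg_sub p₁ p₂, inner_neg_right, map_neg] at h₁
  have hdiff : re ⟪T (p₂ - x₂), p₁ - p₂⟫_𝕜 - re ⟪T (p₁ - x₁), p₁ - p₂⟫_𝕜 =
      re ⟪T (x₁ - x₂), p₁ - p₂⟫_𝕜 - re ⟪T (p₁ - p₂), p₁ - p₂⟫_𝕜 := by
    simp only [map_sub, inner_sub_left]
    ring
  linarith

theorem re_inner_sub_self_le (hT : T.IsPositive) (hconv : ConvexOn ℝ univ h)
    {x₁ x₂ p₁ p₂ : E} (hp₁ : IsWeightedProx T h x₁ p₁) (hp₂ : IsWeightedProx T h x₂ p₂) :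
    re ⟪T (p₁ - p₂), p₁ - p₂⟫_𝕜 ≤ re ⟪T (x₁ - x₂), x₁ - x₂⟫_𝕜 := by
  have hexp := hT.isSymmetric.re_inner_add_smul (x₁ - x₂) (p₁ - p₂) (-1)
  rw [neg_one_smul, ← sub_eq_add_neg] at hexp
  have hnonneg := hT.re_inner_nonneg_left (x₁ - x₂ - (p₁ - p₂))
  have hfirm := hp₁.re_inner_sub_le hT.isSymmetric hconv hp₂
  linarith

end IsWeightedProx

end WeightedProx

theorem stmt_17_general {N : ℕ}
    (W : EuclideanSpace ℂ (Fin N) →L[ℂ] EuclideanSpace ℂ (Fin N))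
    (hW : IsSelfAdjoint W) (σ Sig : ℝ) (hσ : 0 < σ)
    (hlow : ∀ q : EuclideanSpace ℂ (Fin N), σ * ‖q‖ ^ 2 ≤ (@inner ℂ _ _ (W q) q).re)
    (hhigh : ∀ q : EuclideanSpace ℂ (Fin N), (@inner ℂ _ _ (W q) q).re ≤ Sig * ‖q‖ ^ 2)
    (h : EuclideanSpace ℂ (Fin N) → ℝ) (hconv : ConvexOn ℝ Set.univ h)
    (x₁ x₂ p₁ p₂ : EuclideanSpace ℂ (Fin N))
    (hp₁ : ∀ u : EuclideanSpace ℂ (Fin N),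
      h p₁ + (1 / 2) * (@inner ℂ _ _ (W (p₁ - x₁)) (p₁ - x₁)).re ≤
        h u + (1 / 2) * (@inner ℂ _ _ (W (u - x₁)) (u - x₁)).re)
    (hp₂ : ∀ u : EuclideanSpace ℂ (Fin N),
      h p₂ + (1 / 2) * (@inner ℂ _ _ (W (p₂ - x₂)) (p₂ - x₂)).re ≤
        h u + (1 / 2) * (@inner ℂ _ _ (W (u - x₂)) (u - x₂)).re) :
    ‖p₁ - p₂‖ ≤ (Sig / σ) * ‖x₁ - x₂‖ := by
  have hpos : (W : EuclideanSpace ℂ (Fin N) →ₗ[ℂ] _).IsPositive :=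
    ⟨hW.isSymmetric, fun q => (mul_nonneg hσ.le (sq_nonneg _)).trans (hlow q)⟩
  have hnonexp := IsWeightedProx.re_inner_sub_self_le hpos hconv
    (isMinOn_univ_iff.2 hp₁) (isMinOn_univ_iff.2 hp₂)
  exact le_div_mul_of_mul_sq_le hσ (norm_nonneg _) (norm_nonneg _)
    ((hlow _).trans (hnonexp.trans (hhigh _))) ((hlow _).trans (hhigh _))

/-- Lipschitz continuity of the weighted proximal mapping: if `W` is Hermitian with
`σ‖q‖² ≤ ⟨Wq,q⟩ ≤ Σ‖q‖²` (σ, Σ the smallest/largest eigenvalues, σ > 0), `h` is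
proper closed convex, and `p₁, p₂` are the weighted proximal points of `x₁, x₂`,
then `‖p₁ − p₂‖ ≤ (Σ/σ)·‖x₁ − x₂‖`. -/
theorem stmt_17 {N : ℕ}
    (W : EuclideanSpace ℂ (Fin N) →L[ℂ] EuclideanSpace ℂ (Fin N))
    (hW : IsSelfAdjoint W) (σ Sig : ℝ) (hσ : 0 < σ)
    (hlow : ∀ q : EuclideanSpace ℂ (Fin N), σ * ‖q‖ ^ 2 ≤ (@inner ℂ _ _ (W q) q).re)
    (hhigh : ∀ q : EuclideanSpace ℂ (Fin N), (@inner ℂ _ _ (W q) q).re ≤ Sig * ‖q‖ ^ 2)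
    (h : EuclideanSpace ℂ (Fin N) → ℝ) (hconv : ConvexOn ℝ Set.univ h)
    (hlsc : LowerSemicontinuous h)
    (x₁ x₂ p₁ p₂ : EuclideanSpace ℂ (Fin N))
    (hp₁ : ∀ u : EuclideanSpace ℂ (Fin N),
      h p₁ + (1 / 2) * (@inner ℂ _ _ (W (p₁ - x₁)) (p₁ - x₁)).re ≤
        h u + (1 / 2) * (@inner ℂ _ _ (W (u - x₁)) (u - x₁)).re)
    (hp₂ : ∀ u : EuclideanSpace ℂ (Fin N),
      h p₂ + (1 / 2) * (@inner ℂ _ _ (W (p₂ - x₂)) (p₂ - x₂)).re ≤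
        h u + (1 / 2) * (@inner ℂ _ _ (W (u - x₂)) (u - x₂)).re) :
    ‖p₁ - p₂‖ ≤ (Sig / σ) * ‖x₁ - x₂‖ :=
  stmt_17_general W hW σ Sig hσ hlow hhigh h hconv x₁ x₂ p₁ p₂ hp₁ hp₂
end

section
/- Let f : ℂᴺ → ℝ be convex and differentiable (over the real structure), h proper closed convex, B Hermitian positive definite, and a > 0. Then x* is a minimizer of f + λh if and only if x* = prox_{aλh}^B(x* − a B⁻¹ ∇f(x*)). -/
/-!
Both conditions are equivalent to the variational inequality
`λ (h x* - h u) ≤ Re ⟪∇f(x*), u - x*⟫` for all `u`. For convex `h` and a function `ψ` with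
directional derivatives `ψ'` at `x` satisfying the gradient inequality, `x` minimizes `ψ + h` iff
`h x - h u ≤ ψ' (u - x)` for all `u`: one direction is the gradient inequality, the other compares
`x` with the points `x + t (u - x)` of the segment, uses convexity of `h`, and lets `t → 0⁺`.
Apply this to `ψ = f` and to the prox quadratic `ψ u = ½ Re ⟪B (u - v), u - v⟫`, whose derivative
at `x*` in direction `d` is `Re ⟪B (x* - v), d⟫ = a Re ⟪∇f(x*), d⟫`, since `B (x* - v) = a ∇f(x*)`.
-/

open Set RCLike
open scoped InnerProductSpace

section LineDeriv

variable {E : Type*} [AddCommGroup E] [Module ℝ E] {ψ h : E → ℝ} {x u : E}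

theorem sub_le_of_hasLineDerivAt_of_forall_add_le {ψ' : ℝ} (hh : ConvexOn ℝ univ h)
    (hψ : HasLineDerivAt ℝ ψ ψ' x (u - x)) (hmin : ∀ y, ψ x + h x ≤ ψ y + h y) :
    h x - h u ≤ ψ' := by
  refine ge_of_tendsto hψ.tendsto_slope_zero_right ?_
  filter_upwards [Ioc_mem_nhdsGT one_pos] with t ⟨ht0, ht1⟩
  have hseg : h (x + t • (u - x)) ≤ (1 - t) * h x + t * h u := by
    have := hh.2 (mem_univ x) (mem_univ u) (sub_nonneg.2 ht1) ht0.le (by ring)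
    rwa [show (1 - t) • x + t • u = x + t • (u - x) by module] at this
  rw [smul_eq_mul, le_inv_mul_iff₀ ht0]
  linarith [hmin (x + t • (u - x))]

theorem ConvexOn.le_sub_of_hasLineDerivAt {ψ' : ℝ} (hψ : ConvexOn ℝ univ ψ)
    (hψ' : HasLineDerivAt ℝ ψ ψ' x (u - x)) : ψ' ≤ ψ u - ψ x := by
  -- every point minimizes `-ψ + ψ = 0`
  have := sub_le_of_hasLineDerivAt_of_forall_add_le (ψ := fun y => -ψ y) hψ
    (HasDerivAt.neg hψ') (fun y => by simp)
  linarith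

theorem forall_add_le_iff_forall_sub_le_lineDeriv {ψ' : E → ℝ} (hh : ConvexOn ℝ univ h)
    (hψ : ∀ d, HasLineDerivAt ℝ ψ (ψ' d) x d) (hgrad : ∀ u, ψ' (u - x) ≤ ψ u - ψ x) :
    (∀ u, ψ x + h x ≤ ψ u + h u) ↔ ∀ u, h x - h u ≤ ψ' (u - x) := by
  refine ⟨fun hmin u => sub_le_of_hasLineDerivAt_of_forall_add_le hh (hψ _) hmin,
    fun hvar u => ?_⟩
  linarith [hvar u, hgrad u]

end LineDeriv

section QuadraticForm

variable {𝕜 E : Type*} [RCLike 𝕜] [NormedAddCommGroup E] [InnerProductSpace 𝕜 E]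
  {T : E →L[𝕜] E}

theorem LinearMap.IsSymmetric.reApplyInnerSelf_add (hT : T.IsSymmetric) (y d : E) :
    T.reApplyInnerSelf (y + d) =
      T.reApplyInnerSelf y + 2 * re ⟪T y, d⟫_𝕜 + T.reApplyInnerSelf d := by
  have hsymm : re ⟪T d, y⟫_𝕜 = re ⟪T y, d⟫_𝕜 :=
    (congrArg re (hT d y)).trans (inner_re_symm _ _)
  simp only [ContinuousLinearMap.reApplyInnerSelf_apply, map_add, inner_add_left,
    inner_add_right, hsymm]
  ring

theorem ContinuousLinearMap.IsPositive.re_inner_le_half_reApplyInnerSelf_sub_sub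
    (hT : T.IsPositive) (v x u : E) :
    re ⟪T (x - v), u - x⟫_𝕜 ≤
      1 / 2 * T.reApplyInnerSelf (u - v) - 1 / 2 * T.reApplyInnerSelf (x - v) := by
  have := hT.isSymmetric.reApplyInnerSelf_add (x - v) (u - x)
  rw [sub_add_sub_cancel'] at this
  linarith [hT.2 (u - x)]

variable [Module ℝ E] [IsScalarTower ℝ 𝕜 E]

theorem LinearMap.IsSymmetric.hasLineDerivAt_half_reApplyInnerSelf_sub
    (hT : T.IsSymmetric) (v x d : E) :
    HasLineDerivAt ℝ (fun u => 1 / 2 * T.reApplyInnerSelf (u - v)) (re ⟪T (x - v), d⟫_𝕜) x d := by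
  have hline : (fun t : ℝ => 1 / 2 * T.reApplyInnerSelf (x + t • d - v)) = fun t =>
      1 / 2 * T.reApplyInnerSelf (x - v) + t * re ⟪T (x - v), d⟫_𝕜
        + t ^ 2 * (1 / 2 * T.reApplyInnerSelf d) := by
    funext t
    rw [show x + t • d - v = (x - v) + (t : 𝕜) • d by
      rw [← RCLike.real_smul_eq_coe_smul]; abel, hT.reApplyInnerSelf_add,
      T.reApplyInnerSelf_smul, inner_smul_real_right, RCLike.norm_ofReal]
    simp only [RCLike.smul_re, sq_abs]
    ring
  unfold HasLineDerivAt
  rw [hline]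
  exact ((((hasDerivAt_id' (0 : ℝ)).mul_const _).const_add _).add
    ((hasDerivAt_pow 2 (0 : ℝ)).mul_const _)).congr_deriv (by simp)

end QuadraticForm

theorem stmt_18_general {N : ℕ} (f : EuclideanSpace ℂ (Fin N) → ℝ)
    (hf : ConvexOn ℝ Set.univ f)
    (f' : EuclideanSpace ℂ (Fin N) → EuclideanSpace ℂ (Fin N))
    (hf' : ∀ x, HasFDerivAt f
      (Complex.reCLM.comp ((innerSL ℂ (f' x)).restrictScalars ℝ)) x)
    (h : EuclideanSpace ℂ (Fin N) → ℝ) (hconv : ConvexOn ℝ Set.univ h)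
    (B Binv : EuclideanSpace ℂ (Fin N) →L[ℂ] EuclideanSpace ℂ (Fin N))
    (hB : IsSelfAdjoint B)
    (hBpos : ∀ q : EuclideanSpace ℂ (Fin N), q ≠ 0 → 0 < (@inner ℂ _ _ (B q) q).re)
    (hBinv : ∀ q, Binv (B q) = q ∧ B (Binv q) = q)
    (a lam : ℝ) (ha : 0 < a) (hlam : 0 < lam)
    (xstar v : EuclideanSpace ℂ (Fin N)) (hv : v = xstar - a • Binv (f' xstar)) :
    (∀ u, f xstar + lam * h xstar ≤ f u + lam * h u) ↔
      ∀ u : EuclideanSpace ℂ (Fin N),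
        a * lam * h xstar + (1 / 2) * (@inner ℂ _ _ (B (xstar - v)) (xstar - v)).re ≤
          a * lam * h u + (1 / 2) * (@inner ℂ _ _ (B (u - v)) (u - v)).re := by
  set g := f' xstar
  have hBx (d) : re (inner ℂ (B (xstar - v)) d) = a * (inner ℂ g d).re := by
    rw [hv, sub_sub_cancel, B.map_smul_of_tower, (hBinv g).2, ← Complex.coe_smul,
      inner_smul_left, Complex.conj_ofReal, RCLike.re_to_complex, Complex.re_ofReal_mul]
  have hB_pos : B.IsPositive := by
    refine ⟨hB.isSymmetric, fun q => ?_⟩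
    rcases eq_or_ne q 0 with rfl | hq
    · simp [ContinuousLinearMap.reApplyInnerSelf_apply]
    · exact (hBpos q hq).le
  have hprox : (∀ u, a * lam * h xstar + 1 / 2 * B.reApplyInnerSelf (xstar - v) ≤
      a * lam * h u + 1 / 2 * B.reApplyInnerSelf (u - v)) ↔
      ∀ u, a * lam * h xstar - a * lam * h u ≤ a * (inner ℂ g (u - xstar)).re := by
    simpa only [add_comm _ (a * lam * h _), hBx] using
      forall_add_le_iff_forall_sub_le_lineDeriv (h := fun u => a * lam * h u)
        (hconv.smul (by positivity))
        (hB.isSymmetric.hasLineDerivAt_half_reApplyInnerSelf_sub v xstar)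
        (hB_pos.re_inner_le_half_reApplyInnerSelf_sub_sub v xstar)
  refine (forall_add_le_iff_forall_sub_le_lineDeriv (h := fun u => lam * h u)
      (ψ' := fun d => (inner ℂ g d).re) (hconv.smul hlam.le)
      (fun d => (hf' xstar).hasLineDerivAt d)
      (fun u => hf.le_sub_of_hasLineDerivAt ((hf' xstar).hasLineDerivAt _))).trans
    (Iff.trans ?_ hprox.symm)
  refine forall_congr' fun u => ?_
  rw [show a * lam * h xstar - a * lam * h u = a * (lam * h xstar - lam * h u) by ring,
    mul_le_mul_iff_right₀ ha]

/-- Fixed-point characterization of minimizers: for `f` convex and differentiable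
(over the real structure, with gradient `f'` characterized by
`df(x)[u] = Re⟨f'(x), u⟫`), `h` proper closed convex, `B` Hermitian positive
definite with inverse `Binv`, and `a, λ > 0`, the point `x*` minimizes `f + λh`
iff `x* = prox_{aλh}^B(x* − a B⁻¹ f'(x*))`, i.e. iff `x*` minimizes
`u ↦ aλh(u) + (1/2)⟨B(u−v), u−v⟩` with `v = x* − a B⁻¹ f'(x*)`. -/
theorem stmt_18 {N : ℕ} (f : EuclideanSpace ℂ (Fin N) → ℝ)
    (hf : ConvexOn ℝ Set.univ f)
    (f' : EuclideanSpace ℂ (Fin N) → EuclideanSpace ℂ (Fin N))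
    (hf' : ∀ x, HasFDerivAt f
      (Complex.reCLM.comp ((innerSL ℂ (f' x)).restrictScalars ℝ)) x)
    (h : EuclideanSpace ℂ (Fin N) → ℝ) (hconv : ConvexOn ℝ Set.univ h)
    (hlsc : LowerSemicontinuous h)
    (B Binv : EuclideanSpace ℂ (Fin N) →L[ℂ] EuclideanSpace ℂ (Fin N))
    (hB : IsSelfAdjoint B)
    (hBpos : ∀ q : EuclideanSpace ℂ (Fin N), q ≠ 0 → 0 < (@inner ℂ _ _ (B q) q).re)
    (hBinv : ∀ q, Binv (B q) = q ∧ B (Binv q) = q)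
    (a lam : ℝ) (ha : 0 < a) (hlam : 0 < lam)
    (xstar v : EuclideanSpace ℂ (Fin N)) (hv : v = xstar - a • Binv (f' xstar)) :
    (∀ u, f xstar + lam * h xstar ≤ f u + lam * h u) ↔
      ∀ u : EuclideanSpace ℂ (Fin N),
        a * lam * h xstar + (1 / 2) * (@inner ℂ _ _ (B (xstar - v)) (xstar - v)).re ≤
          a * lam * h u + (1 / 2) * (@inner ℂ _ _ (B (u - v)) (u - v)).re :=
  stmt_18_general f hf f' hf' h hconv B Binv hB hBpos hBinv a lam ha hlam xstar v hv
end
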